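/- Suppose $v = (h_1, h_2, h_3, h_4)^t \in \mathbb{C}^4$ satisfies $v^t I_{1,3} v = 0$ and $v^t I_{1,3} v_1 = 0$ and $v^t I_{1,3} v_2 = 0$, where $v_1 = (1 + h_1' h_2',\, -1 + h_1' h_2',\, h_1' + h_2',\, -i(h_1' - h_2'))^t$ and $v_2 = (h_1', h_1', 1, i)^t$ for fixed $h_1', h_2' \in \mathbb{C}$ with $v_1, v_2$ linearly independent. Then $v$ lies in the span of $v_1$ and $v_2$. -/
import Mathlib


open Matrix

/-- `I_{1,3} = diag(-1,1,1,1)`. -/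
noncomputable def I13 : Matrix (Fin 4) (Fin 4) ℂ := Matrix.diagonal ![-1, 1, 1, 1]

/-- if `v ∈ ℂ⁴` is isotropic and orthogonal (w.r.t. the bilinear form
`⟨v,w⟩ = vᵗ I_{1,3} w`) to the linearly independent isotropic vectors
`v₁ = (1+h₁'h₂', -1+h₁'h₂', h₁'+h₂', -i(h₁'-h₂'))ᵗ` and `v₂ = (h₁',h₁',1,i)ᵗ`,
then `v` lies in the span of `v₁` and `v₂`. -/
theorem stmt5 (h₁' h₂' : ℂ) (v v₁ v₂ : Fin 4 → ℂ)
    (hv₁ : v₁ = ![1 + h₁' * h₂', -1 + h₁' * h₂', h₁' + h₂', -(Complex.I * (h₁' - h₂'))])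
    (hv₂ : v₂ = ![h₁', h₁', 1, Complex.I])
    (hind : LinearIndependent ℂ ![v₁, v₂])
    (hiso : v ⬝ᵥ (I13 *ᵥ v) = 0)
    (ho₁ : v ⬝ᵥ (I13 *ᵥ v₁) = 0)
    (ho₂ : v ⬝ᵥ (I13 *ᵥ v₂) = 0) :
    v ∈ Submodule.span ℂ {v₁, v₂} := by
  rw [Submodule.mem_span_pair]
  refine ⟨(v 0 - v 1)/2, (v 2 - Complex.I * v 3 - (v 0 - v 1) * h₂')/2, ?_⟩
  subst hv₁ hv₂
  simp [I13, dotProduct, mulVec, Fin.sum_univ_four, Matrix.diagonal] at ho₁ ho₂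
  funext i
  fin_cases i <;>
    simp [Pi.add_apply, Pi.smul_apply, smul_eq_mul, Fin.isValue]
  · linear_combination ho₁/2 - h₂'/2 * ho₂
  · linear_combination ho₁/2 - h₂'/2 * ho₂
  · linear_combination (-1/2 : ℂ) * ho₂
  · linear_combination (Complex.I/2) * ho₂ - v 3 * Complex.I_sq
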